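/- arXiv:1503.02707 — 3 statements merged into one kernel-verified Lean document; each statement's English description precedes it below -/
import Mathlib

section
/- Let X be a fuzzy Riesz space and I₁, I₂ fuzzy ideals of X. Then: (i) the algebraic sum I₁ + I₂ = {x₁+x₂ : x₁∈I₁, x₂∈I₂} is a fuzzy ideal of X; (ii) I₁⁺ + I₂⁺ = (I₁+I₂)⁺, where S⁺ = {x∈S : μ(0,x)>1/2}; (iii) if I₁ ∩ I₂ = {0} and x = x₁+x₂, y = y₁+y₂ with x₁,y₁ ∈ I₁ and x₂,y₂ ∈ I₂, then μ(x,y)>1/2 implies μ(x₁,y₁)>1/2 and μ(x₂,y₂)>1/2. -/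
/-- A fuzzy Riesz space structure on a real vector space `X`:
a fuzzy order `μ : X × X → [0,1]` compatible with the vector structure,
together with binary suprema and infima with respect to the fuzzy order. -/
structure FuzzyRiesz (X : Type*) [AddCommGroup X] [Module ℝ X] where
  μ : X → X → ℝ
  nonneg : ∀ x y : X, 0 ≤ μ x y
  le_one : ∀ x y : X, μ x y ≤ 1
  refl : ∀ x : X, μ x x = 1
  antisymm : ∀ x y : X, 1 < μ x y + μ y x → x = y
  trans : ∀ x y z : X, min (μ x y) (μ y z) ≤ μ x z
  add_compat : ∀ x y z : X, 1/2 < μ x y → μ x y ≤ μ (x + z) (y + z)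
  smul_compat : ∀ (x y : X) (c : ℝ), 0 ≤ c → 1/2 < μ x y → μ x y ≤ μ (c • x) (c • y)
  sup : X → X → X
  inf : X → X → X
  le_sup_left : ∀ x y : X, 1/2 < μ x (sup x y)
  le_sup_right : ∀ x y : X, 1/2 < μ y (sup x y)
  sup_le : ∀ x y z : X, 1/2 < μ x z → 1/2 < μ y z → 1/2 < μ (sup x y) z
  inf_le_left : ∀ x y : X, 1/2 < μ (inf x y) x
  inf_le_right : ∀ x y : X, 1/2 < μ (inf x y) y
  le_inf : ∀ x y z : X, 1/2 < μ z x → 1/2 < μ z y → 1/2 < μ z (inf x y)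

namespace FuzzyRiesz

universe v

variable {X : Type*} [AddCommGroup X] [Module ℝ X]

/-- The absolute value `|x| = x ∨ (−x)`. -/
def fabs (F : FuzzyRiesz X) (x : X) : X := F.sup x (-x)

/-- `x` is positive: `μ(0,x) > 1/2`. -/
def Pos (F : FuzzyRiesz X) (x : X) : Prop := 1/2 < F.μ 0 x

/-- `S⁺`, the set of positive elements of `S`. -/
def posPart (F : FuzzyRiesz X) (S : Set X) : Set X := {x ∈ S | F.Pos x}

/-- `y` is an upper bound of `A`. -/
def UpperBound (F : FuzzyRiesz X) (A : Set X) (y : X) : Prop := ∀ x ∈ A, 1/2 < F.μ x y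

/-- `y` is a lower bound of `A`. -/
def LowerBound (F : FuzzyRiesz X) (A : Set X) (y : X) : Prop := ∀ x ∈ A, 1/2 < F.μ y x

/-- `z = sup A` in the fuzzy order. -/
def IsSup (F : FuzzyRiesz X) (A : Set X) (z : X) : Prop :=
  F.UpperBound A z ∧ ∀ y : X, F.UpperBound A y → 1/2 < F.μ z y

/-- `z = inf A` in the fuzzy order. -/
def IsInf (F : FuzzyRiesz X) (A : Set X) (z : X) : Prop :=
  F.LowerBound A z ∧ ∀ y : X, F.LowerBound A y → 1/2 < F.μ y z

/-- `z = inf A`, computed relative to the subset `Y` (lower bounds taken in `Y`). -/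
def IsInfIn (F : FuzzyRiesz X) (Y A : Set X) (z : X) : Prop :=
  F.LowerBound A z ∧ ∀ y ∈ Y, F.LowerBound A y → 1/2 < F.μ y z

/-- A set is fuzzy solid if `μ(|x|,|y|) > 1/2` and `y ∈ A` imply `x ∈ A`. -/
def Solid (F : FuzzyRiesz X) (A : Set X) : Prop :=
  ∀ x y : X, 1/2 < F.μ (F.fabs x) (F.fabs y) → y ∈ A → x ∈ A

/-- A fuzzy ideal: a fuzzy solid vector subspace. -/
structure IsIdeal (F : FuzzyRiesz X) (I : Set X) : Prop where
  zero_mem : (0 : X) ∈ I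
  add_mem : ∀ {x y : X}, x ∈ I → y ∈ I → x + y ∈ I
  smul_mem : ∀ (c : ℝ) {x : X}, x ∈ I → c • x ∈ I
  solid : ∀ x y : X, 1/2 < F.μ (F.fabs x) (F.fabs y) → y ∈ I → x ∈ I

/-- A fuzzy ideal of the subspace `Y` (with the restricted fuzzy order and
vector structure): a vector subspace of `Y` that is solid relative to `Y`. -/
structure IsIdealIn (F : FuzzyRiesz X) (Y I : Set X) : Prop where
  subset : I ⊆ Y
  zero_mem : (0 : X) ∈ I
  add_mem : ∀ {x y : X}, x ∈ I → y ∈ I → x + y ∈ I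
  smul_mem : ∀ (c : ℝ) {x : X}, x ∈ I → c • x ∈ I
  solid : ∀ x ∈ Y, ∀ y ∈ I, 1/2 < F.μ (F.fabs x) (F.fabs y) → x ∈ I

/-- A decreasing net. -/
def Decreasing (F : FuzzyRiesz X) {ι : Type v} [Preorder ι] (y : ι → X) : Prop :=
  ∀ a b : ι, a ≤ b → 1/2 < F.μ (y b) (y a)

/-- An increasing net. -/
def Increasing (F : FuzzyRiesz X) {ι : Type v} [Preorder ι] (x : ι → X) : Prop :=
  ∀ a b : ι, a ≤ b → 1/2 < F.μ (x a) (x b)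

/-- The net `x` converges in fuzzy order to `l`: there is a net `y` over the same
index set with `μ(|x_α − l|, y_α) > 1/2` for all `α` and `y_α ↓ 0`. -/
def FuzzyOrderConv (F : FuzzyRiesz X) {ι : Type v} [Preorder ι] (x : ι → X) (l : X) : Prop :=
  ∃ y : ι → X, (∀ a, 1/2 < F.μ (F.fabs (x a - l)) (y a)) ∧ F.Decreasing y ∧
    F.IsInf (Set.range y) 0

/-- Fuzzy order convergence relative to the subset `Y` (the dominating net lies in `Y`
and its infimum is computed in `Y`). -/
def FuzzyOrderConvIn (F : FuzzyRiesz X) (Y : Set X) {ι : Type v} [Preorder ι]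
    (x : ι → X) (l : X) : Prop :=
  ∃ y : ι → X, (∀ a, y a ∈ Y) ∧ (∀ a, 1/2 < F.μ (F.fabs (x a - l)) (y a)) ∧ F.Decreasing y ∧
    F.IsInfIn Y (Set.range y) 0

/-- `S` is fuzzy σ-order closed: closed under fuzzy order limits of sequences in `S`. -/
def SigmaOrderClosed (F : FuzzyRiesz X) (S : Set X) : Prop :=
  ∀ (x : ℕ → X) (l : X), (∀ n, x n ∈ S) → F.FuzzyOrderConv x l → l ∈ S

/-- `S` is fuzzy order closed: closed under fuzzy order limits of nets in `S`. -/
def OrderClosed (F : FuzzyRiesz X) (S : Set X) : Prop :=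
  ∀ (ι : Type v) [Preorder ι] [Nonempty ι] [IsDirected ι (· ≤ ·)],
    ∀ (x : ι → X) (l : X), (∀ a, x a ∈ S) → F.FuzzyOrderConv x l → l ∈ S

/-- `S` is fuzzy order closed in the subspace `Y`. -/
def OrderClosedIn (F : FuzzyRiesz X) (Y S : Set X) : Prop :=
  ∀ (ι : Type v) [Preorder ι] [Nonempty ι] [IsDirected ι (· ≤ ·)],
    ∀ (x : ι → X) (l : X), (∀ a, x a ∈ S) → l ∈ Y → F.FuzzyOrderConvIn Y x l → l ∈ S

/-- A fuzzy band: a fuzzy order closed fuzzy ideal. -/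
def IsBand (F : FuzzyRiesz X) (B : Set X) : Prop := F.IsIdeal B ∧ OrderClosed.{v} F B

/-- A fuzzy band of the subspace `Y`. -/
def IsBandIn (F : FuzzyRiesz X) (Y B : Set X) : Prop := F.IsIdealIn Y B ∧ OrderClosedIn.{v} F Y B

/-- The disjoint complement `A^d = {x : |x| ∧ |y| = 0 for all y ∈ A}`. -/
def dcomp (F : FuzzyRiesz X) (A : Set X) : Set X :=
  {x : X | ∀ y ∈ A, F.inf (F.fabs x) (F.fabs y) = 0}

/-- The algebraic sum of two subsets. -/
def sumSet (A B : Set X) : Set X := {z : X | ∃ a ∈ A, ∃ b ∈ B, z = a + b}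

/-- `S` is fuzzy order dense in `X`. -/
def OrderDense (F : FuzzyRiesz X) (S : Set X) : Prop :=
  ∀ x : X, x ≠ 0 → F.Pos x → ∃ y ∈ S, y ≠ 0 ∧ 1/2 < F.μ y x

/-- `S` is fuzzy order dense in the subspace `Y`. -/
def OrderDenseIn (F : FuzzyRiesz X) (Y S : Set X) : Prop :=
  ∀ x ∈ Y, x ≠ 0 → F.Pos x → ∃ y ∈ S, y ≠ 0 ∧ 1/2 < F.μ y x

/-- `x` is nonnegative: it is not the case that `μ(x,0) > 1/2`. -/
def Nonneg (F : FuzzyRiesz X) (x : X) : Prop := ¬ (1/2 < F.μ x 0)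

/-- `X` is fuzzy Archimedean: for every nonzero nonnegative `x`, the set
`{λ • x : λ > 0}` has no upper bound. -/
def FuzzyArchimedean (F : FuzzyRiesz X) : Prop :=
  ∀ x : X, x ≠ 0 → F.Nonneg x →
    ¬ ∃ y : X, F.UpperBound {z : X | ∃ c : ℝ, 0 < c ∧ z = c • x} y

/-- `X` is fuzzy Dedekind complete. -/
def DedekindComplete (F : FuzzyRiesz X) : Prop :=
  ∀ A : Set X, A.Nonempty → (∃ y, F.UpperBound A y) → ∃ z, F.IsSup A z

/-- `X` is fuzzy Dedekind σ-complete. -/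
def DedekindSigmaComplete (F : FuzzyRiesz X) : Prop :=
  ∀ A : Set X, A.Nonempty → A.Countable →
    ((∃ y, F.UpperBound A y) → ∃ z, F.IsSup A z) ∧
    ((∃ y, F.LowerBound A y) → ∃ z, F.IsInf A z)

/-- `D` is directed to the right. -/
def DirectedRight (F : FuzzyRiesz X) (D : Set X) : Prop :=
  ∀ E : Set X, E ⊆ D → E.Finite → ∃ d ∈ D, ∀ e ∈ E, 1/2 < F.μ e d

/-- `B` is a fuzzy projection band: a fuzzy band such that every `x ∈ X` decomposes
uniquely as `x = x₁ + x₂` with `x₁ ∈ B`, `x₂ ∈ B^d`. -/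
def IsProjBand (F : FuzzyRiesz X) (B : Set X) : Prop :=
  IsBand.{v} F B ∧ ∀ x : X, ∃! p : X × X, p.1 ∈ B ∧ p.2 ∈ F.dcomp B ∧ x = p.1 + p.2

/-- There is an increasing net of elements of `S`, over some nonempty directed
preordered index set, whose supremum is `l`. -/
def IncNetSup (F : FuzzyRiesz X) (S : Set X) (l : X) : Prop :=
  ∃ (ι : Type v) (r : ι → ι → Prop), Nonempty ι ∧ (∀ a, r a a) ∧
    (∀ a b c, r a b → r b c → r a c) ∧ (∀ a b, ∃ c, r a c ∧ r b c) ∧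
    ∃ net : ι → X, (∀ a, net a ∈ S) ∧ (∀ a b, r a b → 1/2 < F.μ (net a) (net b)) ∧
      F.IsSup (Set.range net) l

end FuzzyRiesz

/-!
The relation `1/2 < μ x y` is a lattice order on `X`, with `x ∨ y` and `x ∧ y` as join and meet,
and it is translation invariant; so `X` is an ordinary lattice-ordered group in which `|x|` is the
fuzzy absolute value. Parts (i) and (ii) then follow from the Riesz decomposition property
`0 ≤ x ≤ a + b ⟹ x = u + v` with `0 ≤ u ≤ a`, `0 ≤ v ≤ b`, applied with `a = |x₁|`, `b = |x₂|`
for `x₁ ∈ I₁`, `x₂ ∈ I₂`: to `x = x₁ + x₂` itself for (ii), and to `x⁺` and `x⁻` for (i),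
where `x = x⁺ - x⁻` and `x⁺, x⁻ ≤ |x| ≤ |x₁ + x₂| ≤ |x₁| + |x₂|`. For (iii), `(x₁ - y₁)⁺` is
dominated both by `|x₁ - y₁|` and by `|y₂ - x₂|`, so it lies in `I₁ ∩ I₂ = {0}`.
-/

section LatticeOrderedGroup

variable {α : Type*} [Lattice α] [AddCommGroup α] [IsOrderedAddMonoid α]

theorem exists_add_eq_of_nonneg_of_le_add {a b x : α} (ha : 0 ≤ a) (hb : 0 ≤ b) (hx₀ : 0 ≤ x)
    (hx : x ≤ a + b) : ∃ u v, x = u + v ∧ 0 ≤ u ∧ u ≤ a ∧ 0 ≤ v ∧ v ≤ b := by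
  have hv : x - x ⊓ a = 0 ⊔ (x - a) := by
    rw [sub_eq_add_neg, neg_inf, add_sup, add_neg_cancel, ← sub_eq_add_neg]
  refine ⟨x ⊓ a, x - x ⊓ a, by abel, le_inf hx₀ ha, inf_le_right, sub_nonneg.2 inf_le_left, ?_⟩
  rw [hv]
  exact sup_le hb (sub_le_iff_le_add'.2 hx)

theorem posPart_le_abs (a : α) : a⁺ ≤ |a| :=
  sup_le (le_abs_self a) (abs_nonneg a)

theorem negPart_le_abs (a : α) : a⁻ ≤ |a| :=
  sup_le (neg_le_abs a) (abs_nonneg a)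

end LatticeOrderedGroup

namespace FuzzyRiesz

variable {X : Type*} [AddCommGroup X] [Module ℝ X]

def Crisp (_F : FuzzyRiesz X) : Type _ := X

variable (F : FuzzyRiesz X)

def toCrisp : X → F.Crisp := id

def ofCrisp : F.Crisp → X := id

instance : AddCommGroup F.Crisp := inferInstanceAs (AddCommGroup X)

instance : Lattice F.Crisp where
  le x y := 1/2 < F.μ (F.ofCrisp x) (F.ofCrisp y)
  le_refl x := (F.refl (F.ofCrisp x)).symm ▸ one_half_lt_one
  le_trans x y z hxy hyz := (lt_min hxy hyz).trans_le (F.trans _ _ _)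
  le_antisymm x y hxy hyx := F.antisymm x y (by
    change (1 : ℝ) / 2 < F.μ x y at hxy
    change (1 : ℝ) / 2 < F.μ y x at hyx
    linarith)
  sup := F.sup
  le_sup_left := F.le_sup_left
  le_sup_right := F.le_sup_right
  sup_le := F.sup_le
  inf := F.inf
  inf_le_left := F.inf_le_left
  inf_le_right := F.inf_le_right
  le_inf x y z := F.le_inf y z x

instance : IsOrderedAddMonoid F.Crisp where
  add_le_add_left x y (hxy : 1/2 < F.μ x y) z := hxy.trans_le (F.add_compat x y z hxy)

variable {F}

theorem toCrisp_le_toCrisp {x y : X} : F.toCrisp x ≤ F.toCrisp y ↔ 1/2 < F.μ x y := Iff.rfl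

theorem zero_le_toCrisp {x : X} : 0 ≤ F.toCrisp x ↔ F.Pos x := Iff.rfl

omit [Module ℝ X] in
theorem sumSet_mono {A A' B B' : Set X} (hA : A ⊆ A') (hB : B ⊆ B') :
    sumSet A B ⊆ sumSet A' B' := by
  rintro _ ⟨a, ha, b, hb, rfl⟩
  exact ⟨a, hA ha, b, hB hb, rfl⟩

namespace IsIdeal

variable {I J K : Set X}

def toSubmodule (h : F.IsIdeal I) : Submodule ℝ X where
  carrier := I
  zero_mem' := h.zero_mem
  add_mem' := h.add_mem
  smul_mem' := h.smul_mem

theorem sub_mem (h : F.IsIdeal I) {x y : X} (hx : x ∈ I) (hy : y ∈ I) : x - y ∈ I :=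
  h.toSubmodule.sub_mem hx hy

theorem mem_of_nonneg_of_le_abs (h : F.IsIdeal I) {u : F.Crisp} {y : X} (hy : y ∈ I)
    (hu₀ : 0 ≤ u) (hu : u ≤ |F.toCrisp y|) : F.ofCrisp u ∈ I :=
  h.solid _ y (show |u| ≤ |F.toCrisp y| by rwa [abs_of_nonneg hu₀]) hy

theorem mem_toSubmodule_sup (h₁ : F.IsIdeal J) (h₂ : F.IsIdeal K) {x : X} :
    x ∈ h₁.toSubmodule ⊔ h₂.toSubmodule ↔ x ∈ sumSet J K := by
  simp only [Submodule.mem_sup, sumSet, eq_comm]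
  rfl

theorem mem_sumSet_posPart_of_nonneg_of_le (h₁ : F.IsIdeal J) (h₂ : F.IsIdeal K) {a b : X}
    (ha : a ∈ J) (hb : b ∈ K) {x : F.Crisp} (hx₀ : 0 ≤ x)
    (hx : x ≤ |F.toCrisp a| + |F.toCrisp b|) :
    F.ofCrisp x ∈ sumSet (F.posPart J) (F.posPart K) := by
  obtain ⟨u, v, rfl, hu₀, hu, hv₀, hv⟩ :=
    exists_add_eq_of_nonneg_of_le_add (abs_nonneg _) (abs_nonneg _) hx₀ hx
  exact ⟨F.ofCrisp u, ⟨h₁.mem_of_nonneg_of_le_abs ha hu₀ hu, hu₀⟩,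
    F.ofCrisp v, ⟨h₂.mem_of_nonneg_of_le_abs hb hv₀ hv, hv₀⟩, rfl⟩

theorem sumSet (h₁ : F.IsIdeal J) (h₂ : F.IsIdeal K) : F.IsIdeal (sumSet J K) := by
  set S := h₁.toSubmodule ⊔ h₂.toSubmodule
  have hS : ∀ {x}, x ∈ S ↔ x ∈ FuzzyRiesz.sumSet J K := mem_toSubmodule_sup h₁ h₂
  refine ⟨hS.1 S.zero_mem, fun hx hy => hS.1 (S.add_mem (hS.2 hx) (hS.2 hy)),
    fun c _ hx => hS.1 (S.smul_mem c (hS.2 hx)), ?_⟩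
  rintro x _ hxy ⟨a, ha, b, hb, rfl⟩
  have hx : |F.toCrisp x| ≤ |F.toCrisp a| + |F.toCrisp b| :=
    (show |F.toCrisp x| ≤ |F.toCrisp a + F.toCrisp b| from hxy).trans (abs_add_le _ _)
  have mem : ∀ w : F.Crisp, 0 ≤ w → w ≤ |F.toCrisp x| → F.ofCrisp w ∈ S := fun w hw₀ hw =>
    hS.2 <| sumSet_mono (fun _ => And.left) (fun _ => And.left)
      (mem_sumSet_posPart_of_nonneg_of_le h₁ h₂ ha hb hw₀ (hw.trans hx))
  have hx_eq : F.ofCrisp (F.toCrisp x)⁺ - F.ofCrisp (F.toCrisp x)⁻ = x :=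
    posPart_sub_negPart (F.toCrisp x)
  exact hS.1 <| hx_eq ▸ S.sub_mem
    (mem _ (posPart_nonneg _) (posPart_le_abs _)) (mem _ (negPart_nonneg _) (negPart_le_abs _))

theorem sumSet_posPart (h₁ : F.IsIdeal J) (h₂ : F.IsIdeal K) :
    FuzzyRiesz.sumSet (F.posPart J) (F.posPart K) = F.posPart (FuzzyRiesz.sumSet J K) := by
  ext x
  constructor
  · rintro ⟨a, ⟨ha, ha₀⟩, b, ⟨hb, hb₀⟩, rfl⟩
    exact ⟨⟨a, ha, b, hb, rfl⟩, zero_le_toCrisp.1 (add_nonneg (zero_le_toCrisp.2 ha₀)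
      (zero_le_toCrisp.2 hb₀))⟩
  · rintro ⟨⟨a, ha, b, hb, rfl⟩, hx₀⟩
    exact mem_sumSet_posPart_of_nonneg_of_le h₁ h₂ ha hb (x := F.toCrisp a + F.toCrisp b)
      (zero_le_toCrisp.2 hx₀)
      (add_le_add (le_abs_self (F.toCrisp a)) (le_abs_self (F.toCrisp b)))

theorem toCrisp_le_of_add_le_add (hJ : F.IsIdeal J) (hK : F.IsIdeal K) (hJK : J ∩ K = {0})
    {a b c d : X} (ha : a ∈ J) (hb : b ∈ J) (hc : c ∈ K) (hd : d ∈ K)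
    (h : F.toCrisp (a + c) ≤ F.toCrisp (b + d)) : F.toCrisp a ≤ F.toCrisp b := by
  set w := (F.toCrisp a - F.toCrisp b)⁺
  have hab : F.toCrisp a - F.toCrisp b ≤ F.toCrisp d - F.toCrisp c := by
    rw [sub_le_sub_iff, add_comm (F.toCrisp d)]
    exact h
  have hwJ : F.ofCrisp w ∈ J :=
    hJ.mem_of_nonneg_of_le_abs (hJ.sub_mem ha hb) (posPart_nonneg _) (posPart_le_abs _)
  have hwK : F.ofCrisp w ∈ K :=
    hK.mem_of_nonneg_of_le_abs (hK.sub_mem hd hc) (posPart_nonneg _)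
      ((posPart_mono hab).trans (posPart_le_abs _))
  have hw : F.ofCrisp w ∈ ({0} : Set X) := hJK ▸ ⟨hwJ, hwK⟩
  exact sub_nonpos.1 (posPart_eq_zero.1 hw)

end IsIdeal

end FuzzyRiesz

/-- for fuzzy ideals `I₁, I₂`: (i) `I₁ + I₂` is a fuzzy ideal;
(ii) `I₁⁺ + I₂⁺ = (I₁ + I₂)⁺`; (iii) if `I₁ ∩ I₂ = {0}` then the decomposition of the
fuzzy order relation holds componentwise. -/
theorem sum_ideal_spec {X : Type*} [AddCommGroup X] [Module ℝ X]
    (F : FuzzyRiesz X) (I₁ I₂ : Set X) (h₁ : F.IsIdeal I₁) (h₂ : F.IsIdeal I₂) :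
    F.IsIdeal (FuzzyRiesz.sumSet I₁ I₂) ∧
    FuzzyRiesz.sumSet (F.posPart I₁) (F.posPart I₂) = F.posPart (FuzzyRiesz.sumSet I₁ I₂) ∧
    (I₁ ∩ I₂ = {0} → ∀ x₁ y₁ x₂ y₂ : X, x₁ ∈ I₁ → y₁ ∈ I₁ → x₂ ∈ I₂ → y₂ ∈ I₂ →
      1/2 < F.μ (x₁ + x₂) (y₁ + y₂) → 1/2 < F.μ x₁ y₁ ∧ 1/2 < F.μ x₂ y₂) := by
  refine ⟨h₁.sumSet h₂, h₁.sumSet_posPart h₂, fun hI x₁ y₁ x₂ y₂ hx₁ hy₁ hx₂ hy₂ hμ => ?_⟩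
  simp only [← FuzzyRiesz.toCrisp_le_toCrisp] at hμ ⊢
  refine ⟨h₁.toCrisp_le_of_add_le_add h₂ hI hx₁ hy₁ hx₂ hy₂ hμ,
    h₂.toCrisp_le_of_add_le_add h₁ (Set.inter_comm I₁ I₂ ▸ hI) hx₂ hy₂ hx₁ hy₁ ?_⟩
  rwa [add_comm x₂, add_comm y₂]
end

section
/- Let X be a fuzzy Riesz space and J an arbitrary index set. Then: (i) if B₁ is a fuzzy band of X and B₂ is a fuzzy band of B₁ (with the restricted fuzzy order and vector structure), then B₂ is a fuzzy band of X; (ii) if B_j is a fuzzy band of X for each j∈J, then ∩_{j∈J} B_j is a fuzzy band of X. -/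
/-!
If `xₐ → l` in fuzzy order with `xₐ ∈ B₂`, dominated by `yₐ ↓ 0`, then `l ∈ B₁`, but the `yₐ`
need not lie in `B₁`. Put `wₐ = (|l| - yₐ) ∨ 0` instead: `0 ≤ wₐ ≤ |xₐ| ∧ |l|`, so `wₐ ∈ B₂` by
solidity, and `wₐ → |l|` is dominated by `|l| - wₐ ∈ B₁`, which lies between `0` and `yₐ` and so
decreases to `0` already in `B₁`. Closedness of `B₂` in `B₁` gives `|l| ∈ B₂`, hence `l ∈ B₂`.
-/

universe u

namespace FuzzyRiesz

variable {X : Type*} [AddCommGroup X] [Module ℝ X] {F : FuzzyRiesz X}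

local notation:50 x:51 " ⊑[" F "] " y:51 => (1 / 2 : ℝ) < FuzzyRiesz.μ F x y

section Order

variable (F) in
theorem le_refl (x : X) : x ⊑[F] x := by rw [F.refl]; norm_num

theorem le_trans {x y z : X} (hxy : x ⊑[F] y) (hyz : y ⊑[F] z) : x ⊑[F] z :=
  (lt_min hxy hyz).trans_le (F.trans x y z)

theorem add_le_add_right {x y : X} (h : x ⊑[F] y) (z : X) : x + z ⊑[F] y + z :=
  h.trans_le (F.add_compat x y z h)

theorem add_le_add_left {x y : X} (h : x ⊑[F] y) (z : X) : z + x ⊑[F] z + y := by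
  simpa only [add_comm z] using add_le_add_right h z

theorem neg_le_neg {x y : X} (h : x ⊑[F] y) : -y ⊑[F] -x := by
  convert add_le_add_right h (-x - y) using 2 <;> abel

theorem sub_le_sub_right {x y : X} (h : x ⊑[F] y) (z : X) : x - z ⊑[F] y - z := by
  simpa only [sub_eq_add_neg] using add_le_add_right h (-z)

theorem sub_le_sub_left {x y : X} (h : x ⊑[F] y) (z : X) : z - y ⊑[F] z - x := by
  simpa only [sub_eq_add_neg] using add_le_add_left (neg_le_neg h) z

theorem sub_le_of_le_add {x y z : X} (h : x ⊑[F] y + z) : x - z ⊑[F] y := by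
  simpa only [add_sub_cancel_right] using sub_le_sub_right h z

theorem sub_le_self {x y : X} (hy : 0 ⊑[F] y) : x - y ⊑[F] x := by
  simpa only [sub_zero] using sub_le_sub_left hy x

theorem sub_nonneg_of_le {x y : X} (h : x ⊑[F] y) : 0 ⊑[F] y - x := by
  simpa only [sub_self] using sub_le_sub_right h x

theorem sub_nonpos_of_le {x y : X} (h : x ⊑[F] y) : x - y ⊑[F] 0 := by
  simpa only [sub_self] using sub_le_sub_right h y

end Order

section Abs

variable (F)

theorem le_fabs (x : X) : x ⊑[F] F.fabs x := F.le_sup_left x (-x)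

theorem neg_le_fabs (x : X) : -x ⊑[F] F.fabs x := F.le_sup_right x (-x)

theorem fabs_nonneg (x : X) : 0 ⊑[F] F.fabs x := by
  have hx : 0 ⊑[F] F.fabs x + x := by
    simpa only [neg_add_cancel] using add_le_add_right (F.neg_le_fabs x) x
  have h2 : 0 ⊑[F] F.fabs x + F.fabs x := le_trans hx (add_le_add_left (F.le_fabs x) _)
  -- halve `0 ≤ 2|x|`
  have h := h2.trans_le (F.smul_compat _ _ (1 / 2) (by norm_num) h2)
  rwa [smul_zero, show (1 / 2 : ℝ) • (F.fabs x + F.fabs x) = F.fabs x by module] at h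

theorem fabs_neg_le (x : X) : F.fabs (-x) ⊑[F] F.fabs x :=
  F.sup_le _ _ _ (F.neg_le_fabs x) (by simpa only [neg_neg] using F.le_fabs x)

theorem fabs_sub_comm_le (x y : X) : F.fabs (x - y) ⊑[F] F.fabs (y - x) := by
  simpa only [neg_sub] using F.fabs_neg_le (y - x)

theorem fabs_add_le (x y : X) : F.fabs (x + y) ⊑[F] F.fabs x + F.fabs y :=
  F.sup_le _ _ _
    (le_trans (add_le_add_right (F.le_fabs x) y) (add_le_add_left (F.le_fabs y) _))
    (by simpa only [neg_add] using
      le_trans (add_le_add_right (F.neg_le_fabs x) (-y)) (add_le_add_left (F.neg_le_fabs y) _))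

variable {F}

theorem fabs_le_self_of_nonneg {x : X} (hx : 0 ⊑[F] x) : F.fabs x ⊑[F] x :=
  F.sup_le _ _ _ (F.le_refl x) (le_trans (by simpa only [neg_zero] using neg_le_neg hx) hx)

theorem fabs_le_neg_of_nonpos {x : X} (hx : x ⊑[F] 0) : F.fabs x ⊑[F] -x :=
  F.sup_le _ _ _ (le_trans hx (by simpa only [neg_zero] using neg_le_neg hx)) (F.le_refl _)

theorem fabs_sub_le_sub_of_le {x y : X} (h : x ⊑[F] y) : F.fabs (x - y) ⊑[F] y - x := by
  simpa only [neg_sub] using fabs_le_neg_of_nonpos (sub_nonpos_of_le h)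

theorem fabs_sub_le_fabs_of_fabs_sub_le {x l y : X} (h : F.fabs (x - l) ⊑[F] y) :
    F.fabs l - y ⊑[F] F.fabs x := by
  refine sub_le_of_le_add (le_trans ?_ (add_le_add_left (le_trans (F.fabs_sub_comm_le l x) h) _))
  simpa only [add_sub_cancel] using F.fabs_add_le x (l - x)

end Abs

section Ideal

variable {Y I : Set X}

theorem IsIdeal.sub_mem_s8 (hI : F.IsIdeal I) {x y : X} (hx : x ∈ I) (hy : y ∈ I) : x - y ∈ I := by
  simpa only [neg_one_smul, ← sub_eq_add_neg] using hI.add_mem hx (hI.smul_mem (-1) hy)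

theorem IsIdeal.mem_of_nonneg_of_le_fabs (hI : F.IsIdeal I) {w y : X} (hw : 0 ⊑[F] w)
    (hwy : w ⊑[F] F.fabs y) (hy : y ∈ I) : w ∈ I :=
  hI.solid w y (le_trans (fabs_le_self_of_nonneg hw) hwy) hy

theorem IsIdealIn.mem_of_nonneg_of_le_fabs (hI : F.IsIdealIn Y I) {w y : X} (hwY : w ∈ Y)
    (hw : 0 ⊑[F] w) (hwy : w ⊑[F] F.fabs y) (hy : y ∈ I) : w ∈ I :=
  hI.solid w hwY y hy (le_trans (fabs_le_self_of_nonneg hw) hwy)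

theorem IsIdealIn.isIdeal (hY : F.IsIdeal Y) (hI : F.IsIdealIn Y I) : F.IsIdeal I where
  zero_mem := hI.zero_mem
  add_mem := hI.add_mem
  smul_mem := hI.smul_mem
  solid x y hxy hy := hI.solid x (hY.solid x y hxy (hI.subset hy)) y hy hxy

theorem isIdeal_iInter {J : Type*} {B : J → Set X} (hB : ∀ j, F.IsIdeal (B j)) :
    F.IsIdeal (⋂ j, B j) where
  zero_mem := Set.mem_iInter.2 fun j => (hB j).zero_mem
  add_mem hx hy := Set.mem_iInter.2 fun j =>
    (hB j).add_mem (Set.mem_iInter.1 hx j) (Set.mem_iInter.1 hy j)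
  smul_mem c _ hx := Set.mem_iInter.2 fun j => (hB j).smul_mem c (Set.mem_iInter.1 hx j)
  solid x y hxy hy := Set.mem_iInter.2 fun j => (hB j).solid x y hxy (Set.mem_iInter.1 hy j)

end Ideal

theorem isInfIn_range_of_nonneg_of_le {ι : Type*} {Y : Set X} {y z : ι → X}
    (hy : F.IsInf (Set.range y) 0) (hz : ∀ a, 0 ⊑[F] z a) (hzy : ∀ a, z a ⊑[F] y a) :
    F.IsInfIn Y (Set.range z) 0 := by
  refine ⟨Set.forall_mem_range.2 hz, fun b _ hb => hy.2 b (Set.forall_mem_range.2 fun a => ?_)⟩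
  exact le_trans (hb (z a) ⟨a, rfl⟩) (hzy a)

theorem exists_fuzzyOrderConvIn_fabs {ι : Type*} [Preorder ι] {B : Set X} (hB : F.IsIdeal B)
    {x : ι → X} {l : X} (hl : l ∈ B) (hconv : F.FuzzyOrderConv x l) :
    ∃ w : ι → X, (∀ a, 0 ⊑[F] w a ∧ w a ⊑[F] F.fabs (x a) ∧ w a ⊑[F] F.fabs l) ∧
      F.FuzzyOrderConvIn B w (F.fabs l) := by
  obtain ⟨y, hxy, hy_dec, hy_inf⟩ := hconv
  set L := F.fabs l
  have hy : ∀ a, 0 ⊑[F] y a := fun a => le_trans (F.fabs_nonneg _) (hxy a)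
  let w a := F.sup (L - y a) 0
  have hw : ∀ a, 0 ⊑[F] w a := fun a => F.le_sup_right _ _
  have hwL : ∀ a, w a ⊑[F] L := fun a => F.sup_le _ _ _ (sub_le_self (hy a)) (F.fabs_nonneg l)
  have hLB : L ∈ B := hB.mem_of_nonneg_of_le_fabs (F.fabs_nonneg l) (F.le_refl L) hl
  refine ⟨w, fun a => ⟨hw a, ?_, hwL a⟩, fun a => L - w a, fun a => hB.sub_mem_s8 hLB ?_,
    fun a => fabs_sub_le_sub_of_le (hwL a), fun a b hab => sub_le_sub_left ?_ L,
    isInfIn_range_of_nonneg_of_le hy_inf (fun a => sub_nonneg_of_le (hwL a)) fun a => ?_⟩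
  · exact F.sup_le _ _ _ (fabs_sub_le_fabs_of_fabs_sub_le (hxy a)) (F.fabs_nonneg _)
  · exact hB.mem_of_nonneg_of_le_fabs (hw a) (hwL a) hl
  · exact F.sup_le _ _ _ (le_trans (sub_le_sub_left (hy_dec a b hab) L) (F.le_sup_left _ _))
      (hw b)
  · simpa only [sub_sub_cancel] using sub_le_sub_left (F.le_sup_left (L - y a) 0) L

section Band

variable {Y B : Set X}

theorem IsBandIn.orderClosed (hY : F.IsBand.{u} Y) (hB : F.IsBandIn.{u} Y B) :
    F.OrderClosed.{u} B := by
  intro ι _ _ _ x l hx hconv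
  have hlY : l ∈ Y := hY.2 ι x l (fun a => hB.1.subset (hx a)) hconv
  obtain ⟨w, hw, hw_conv⟩ := exists_fuzzyOrderConvIn_fabs hY.1 hlY hconv
  have hwB : ∀ a, w a ∈ B := fun a =>
    hB.1.mem_of_nonneg_of_le_fabs (hY.1.mem_of_nonneg_of_le_fabs (hw a).1 (hw a).2.2 hlY)
      (hw a).1 (hw a).2.1 (hx a)
  have hLY : F.fabs l ∈ Y := hY.1.mem_of_nonneg_of_le_fabs (F.fabs_nonneg l) (F.le_refl _) hlY
  have hLB : F.fabs l ∈ B := hB.2 ι w _ hwB hLY hw_conv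
  exact hB.1.solid l hlY _ hLB (F.le_fabs _)

theorem IsBandIn.isBand (hY : F.IsBand.{u} Y) (hB : F.IsBandIn.{u} Y B) : F.IsBand.{u} B :=
  ⟨hB.1.isIdeal hY.1, hB.orderClosed hY⟩

theorem isBand_iInter {J : Type*} {B : J → Set X} (hB : ∀ j, F.IsBand.{u} (B j)) :
    F.IsBand.{u} (⋂ j, B j) :=
  ⟨isIdeal_iInter fun j => (hB j).1, fun ι _ _ _ x l hx hconv =>
    Set.mem_iInter.2 fun j => (hB j).2 ι x l (fun a => Set.mem_iInter.1 (hx a) j) hconv⟩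

end Band

end FuzzyRiesz

/-- (i) a fuzzy band of a fuzzy band of `X` is a fuzzy band of `X`;
(ii) an arbitrary intersection of fuzzy bands of `X` is a fuzzy band of `X`. -/
theorem isBand_trans_and_iInter {X : Type*} [AddCommGroup X] [Module ℝ X]
    (F : FuzzyRiesz X) :
    (∀ B₁ B₂ : Set X, FuzzyRiesz.IsBand.{u} F B₁ → FuzzyRiesz.IsBandIn.{u} F B₁ B₂ →
      FuzzyRiesz.IsBand.{u} F B₂) ∧
    (∀ (J : Type u) (B : J → Set X), (∀ j, FuzzyRiesz.IsBand.{u} F (B j)) →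
      FuzzyRiesz.IsBand.{u} F (⋂ j, B j)) :=
  ⟨fun _ _ h₁ h₂ => h₂.isBand h₁, fun _ _ => FuzzyRiesz.isBand_iInter⟩
end

section
/- Let D be a nonempty subset of a fuzzy Riesz space X. Then the fuzzy band generated by D (the smallest fuzzy band of X containing D) exists, is unique, and equals B_D = { x ∈ X : there exists a net (x_α) of positive elements of I_D with x_α ↑ |x| }, where I_D is the fuzzy ideal generated by D. -/
universe u

/-- The candidate for the fuzzy band generated by `D` (given the fuzzy ideal `ID`
generated by `D`): all `x` such that some increasing net of positive elements of `ID`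
has supremum `|x|`. -/
def genBand {X : Type*} [AddCommGroup X] [Module ℝ X] (F : FuzzyRiesz X) (ID : Set X) :
    Set X :=
  {x : X | FuzzyRiesz.IncNetSup.{u} F (F.posPart ID) (F.fabs x)}

/-!
The relation `μ(x, y) > 1/2` is a lattice order on `X` compatible with addition and with
multiplication by nonnegative scalars, so `X` is an ordinary Riesz space and every fuzzy notion in
the statement is the crisp one. The candidate `B_D` contains `I_D`; it is solid and a subspace
because `· ⊓ u` preserves suprema. It is order closed: if `|x_γ - l| ≤ y_γ ↓ 0` and families in
`I_D⁺` have suprema `|x_γ|`, their meets with `(|l| - y_γ) ⊔ 0` form one family in `I_D⁺` with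
supremum `|l|`, and its finite suprema are an increasing net. Conversely an increasing net
`x_α ↑ |x|` converges in order to `|x|`, dominated by `|x| - x_α ↓ 0`, so every band containing
`I_D` contains `|x|` and hence `x`.
-/

open Set

section LatticeOrderedGroup

variable {α : Type*} [Lattice α] [AddCommGroup α] [IsOrderedAddMonoid α]

theorem IsLUB.range_inf_const {ι : Sort*} {f : ι → α} {s : α} (h : IsLUB (range f) s) (u : α) :
    IsLUB (range fun i => f i ⊓ u) (s ⊓ u) := by
  refine ⟨forall_mem_range.2 fun i => inf_le_inf_right u (h.1 (mem_range_self i)), fun z hz => ?_⟩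
  -- `f i + u = (f i ⊓ u) + (f i ⊔ u) ≤ z + (s ⊔ u)`, and the same identity at `s` recovers `s ⊓ u`.
  have hf : ∀ i, f i ≤ z + (s ⊔ u) - u := fun i => by
    rw [le_sub_iff_add_le, ← inf_add_sup]
    exact add_le_add (hz (mem_range_self i)) (sup_le_sup_right (h.1 (mem_range_self i)) u)
  have hs : s + u ≤ z + (s ⊔ u) := le_sub_iff_add_le.1 (h.2 (forall_mem_range.2 hf))
  rw [← inf_add_sup s u] at hs
  exact le_of_add_le_add_right hs

theorem IsLUB.range_add {ι κ : Type*} {f : ι → α} {g : κ → α} {s t : α}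
    (hf : IsLUB (range f) s) (hg : IsLUB (range g) t) :
    IsLUB (range fun p : ι × κ => f p.1 + g p.2) (s + t) := by
  simpa only [← image2_add, image2_range] using hf.add hg

theorem IsLUB.isGLB_range_sub {ι : Sort*} {f : ι → α} {s : α} (h : IsLUB (range f) s) :
    IsGLB (range fun i => s - f i) 0 := by
  refine ⟨forall_mem_range.2 fun i => sub_nonneg.2 (h.1 (mem_range_self i)), fun z hz => ?_⟩
  have hs : s ≤ s - z := h.2 (forall_mem_range.2 fun i => le_sub_comm.1 (hz (mem_range_self i)))
  exact (le_sub_self_iff s).1 hs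

theorem sub_le_abs_of_abs_sub_le {x l y : α} (h : |x - l| ≤ y) : |l| - y ≤ |x| := by
  refine sub_le_comm.1 ?_
  calc |l| - |x| ≤ |(|l| - |x|)| := le_abs_self _
    _ ≤ |l - x| := abs_abs_sub_abs_le l x
    _ = |x - l| := abs_sub_comm l x
    _ ≤ y := h

end LatticeOrderedGroup

section OrderedModule

variable {𝕜 α : Type*} [Field 𝕜] [LinearOrder 𝕜] [IsStrictOrderedRing 𝕜] [AddCommGroup α]
  [Module 𝕜 α] {c : 𝕜}

theorem IsLUB.range_smul_of_pos [PartialOrder α] [PosSMulMono 𝕜 α] {ι : Sort*} {f : ι → α}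
    {s : α} (h : IsLUB (range f) s) (hc : 0 < c) :
    IsLUB (range fun i => c • f i) (c • s) := by
  simpa only [← range_comp, Function.comp_def, OrderIso.smulRight_apply] using
    (OrderIso.smulRight (β := α) hc).isLUB_image'.2 h

theorem abs_smul_of_pos [Lattice α] [PosSMulMono 𝕜 α] (hc : 0 < c) (x : α) :
    |c • x| = c • |x| := by
  simpa only [abs, smul_neg, OrderIso.smulRight_apply] using
    ((OrderIso.smulRight (β := α) hc).map_sup x (-x)).symm

end OrderedModule

theorem isLUB_range_finsetSup' {β P : Type*} [SemilatticeSup β] {v : P → β} {l : β}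
    (h : IsLUB (range v) l) :
    IsLUB (range fun s : {s : Finset P // s.Nonempty} => s.1.sup' s.2 v) l := by
  have hub : upperBounds (range fun s : {s : Finset P // s.Nonempty} => s.1.sup' s.2 v) =
      upperBounds (range v) := by
    ext z
    simp only [mem_upperBounds, forall_mem_range, Finset.sup'_le_iff, Subtype.forall]
    exact ⟨fun hz p => hz {p} (Finset.singleton_nonempty p) p (Finset.mem_singleton_self p),
      fun hz _ _ p _ => hz p⟩
  rwa [IsLUB, hub]

namespace FuzzyRiesz

variable {X : Type*} [AddCommGroup X] [Module ℝ X]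

/-- The crisp order `x ≤ y ↔ 1/2 < μ x y`, with `⊔ = F.sup` and `⊓ = F.inf`. Under it `F.fabs`,
`F.Pos`, `F.IsSup`, `F.IsInf`, `F.Increasing`, `F.Decreasing` are definitionally `|·|`, `0 ≤ ·`,
`IsLUB`, `IsGLB`, `Monotone`, `Antitone`. -/
abbrev toLattice (F : FuzzyRiesz X) : Lattice X where
  le x y := 1/2 < F.μ x y
  le_refl x := by norm_num [F.refl]
  le_trans x y z hxy hyz := (lt_min hxy hyz).trans_le (F.trans x y z)
  le_antisymm x y hxy hyx := F.antisymm x y (by linarith)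
  sup := F.sup
  le_sup_left := F.le_sup_left
  le_sup_right := F.le_sup_right
  sup_le := F.sup_le
  inf := F.inf
  inf_le_left := F.inf_le_left
  inf_le_right := F.inf_le_right
  le_inf x y z hxy hxz := F.le_inf y z x hxy hxz

instance isOrderedAddMonoid (F : FuzzyRiesz X) :
    letI := F.toLattice; IsOrderedAddMonoid X :=
  letI := F.toLattice
  { add_le_add_left := fun x y h z => h.trans_le (F.add_compat x y z h) }

instance posSMulMono (F : FuzzyRiesz X) :
    letI := F.toLattice; PosSMulMono ℝ X :=
  letI := F.toLattice
  ⟨fun c hc x y h => h.trans_le (F.smul_compat x y c hc h)⟩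

variable {F : FuzzyRiesz X} {I : Set X}

theorem IsIdeal.mem_posPart_of_le (hI : F.IsIdeal I) {a b : X} (ha : a ∈ F.posPart I) :
    letI := F.toLattice; 0 ≤ b → b ≤ a → b ∈ F.posPart I := by
  let _ := F.toLattice
  intro hb hba
  refine ⟨hI.solid b a ?_ ha.1, hb⟩
  show |b| ≤ |a|
  rwa [abs_of_nonneg hb, abs_of_nonneg (show 0 ≤ a from ha.2)]

theorem IsIdeal.supClosed_posPart (hI : F.IsIdeal I) :
    letI := F.toLattice; SupClosed (F.posPart I) := by
  let _ := F.toLattice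
  intro a ha b hb
  have ha0 : 0 ≤ a := ha.2
  have hb0 : 0 ≤ b := hb.2
  exact hI.mem_posPart_of_le ⟨hI.add_mem ha.1 hb.1, add_nonneg ha0 hb0⟩ (le_sup_of_le_left ha0)
    (_root_.sup_le (le_add_of_nonneg_right hb0) (le_add_of_nonneg_left ha0))

theorem incNetSup_of_isSup {S : Set X} (hS : letI := F.toLattice; SupClosed S) {P : Type u}
    [Nonempty P] {v : P → X} (hv : ∀ p, v p ∈ S) {l : X} (hl : F.IsSup (range v) l) :
    IncNetSup.{u} F S l := by
  classical
  let _ := F.toLattice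
  obtain ⟨p⟩ := ‹Nonempty P›
  refine ⟨{s : Finset P // s.Nonempty}, fun s t => s.1 ⊆ t.1, ⟨⟨{p}, Finset.singleton_nonempty p⟩⟩,
    fun s => subset_rfl, fun _ _ _ => Finset.Subset.trans,
    fun s t => ⟨⟨s.1 ∪ t.1, s.2.mono Finset.subset_union_left⟩, Finset.subset_union_left,
      Finset.subset_union_right⟩,
    fun s => s.1.sup' s.2 v, fun s => hS.finsetSup'_mem s.2 fun p _ => hv p,
    fun s t hst => Finset.sup'_mono v hst s.2, isLUB_range_finsetSup' hl⟩

end FuzzyRiesz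

section GenBand

variable {X : Type*} [AddCommGroup X] [Module ℝ X] {F : FuzzyRiesz X} {I : Set X}

theorem mem_genBand_iff (hI : F.IsIdeal I) {x : X} :
    letI := F.toLattice
    x ∈ genBand.{u} F I ↔ ∃ (P : Type u) (_ : Nonempty P) (v : P → X),
      (∀ p, v p ∈ F.posPart I) ∧ IsLUB (range v) |x| := by
  let _ := F.toLattice
  refine ⟨fun ⟨P, _, hP, _, _, _, v, hv, _, hsup⟩ => ⟨P, hP, v, hv, hsup⟩, ?_⟩
  rintro ⟨P, hP, v, hv, hsup⟩
  exact FuzzyRiesz.incNetSup_of_isSup hI.supClosed_posPart hv hsup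

theorem subset_genBand (hI : F.IsIdeal I) : I ⊆ genBand.{u} F I := by
  let _ := F.toLattice
  intro x hx
  refine (mem_genBand_iff hI).2
    ⟨PUnit, inferInstance, fun _ => |x|, fun _ => ⟨hI.solid _ x ?_ hx, abs_nonneg x⟩, ?_⟩
  · exact (abs_abs x).le
  · simpa only [range_const] using isLUB_singleton

theorem genBand_solid (hI : F.IsIdeal I) (x y : X) (hxy : 1/2 < F.μ (F.fabs x) (F.fabs y))
    (hy : y ∈ genBand.{u} F I) : x ∈ genBand.{u} F I := by
  let _ := F.toLattice
  have hxy : |x| ≤ |y| := hxy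
  obtain ⟨P, hP, v, hv, hsup⟩ := (mem_genBand_iff hI).1 hy
  refine (mem_genBand_iff hI).2 ⟨P, hP, fun p => v p ⊓ |x|,
    fun p => hI.mem_posPart_of_le (hv p) (le_inf (hv p).2 (abs_nonneg x)) inf_le_left, ?_⟩
  simpa only [inf_eq_right.2 hxy] using hsup.range_inf_const |x|

theorem genBand_add (hI : F.IsIdeal I) {x y : X} (hx : x ∈ genBand.{u} F I)
    (hy : y ∈ genBand.{u} F I) : x + y ∈ genBand.{u} F I := by
  let _ := F.toLattice
  obtain ⟨P, hP, v, hv, hsupx⟩ := (mem_genBand_iff hI).1 hx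
  obtain ⟨Q, hQ, w, hw, hsupy⟩ := (mem_genBand_iff hI).1 hy
  have hvw : ∀ p : P × Q, v p.1 + w p.2 ∈ F.posPart I := fun p =>
    ⟨hI.add_mem (hv p.1).1 (hw p.2).1,
      show 0 ≤ v p.1 + w p.2 from add_nonneg (hv p.1).2 (hw p.2).2⟩
  refine (mem_genBand_iff hI).2 ⟨P × Q, inferInstance, fun p => (v p.1 + w p.2) ⊓ |x + y|,
    fun p => hI.mem_posPart_of_le (hvw p) (le_inf (hvw p).2 (abs_nonneg _)) inf_le_left, ?_⟩
  simpa only [inf_eq_right.2 (abs_add_le x y)] using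
    (hsupx.range_add hsupy).range_inf_const |x + y|

theorem genBand_smul (hI : F.IsIdeal I) (c : ℝ) {x : X} (hx : x ∈ genBand.{u} F I) :
    c • x ∈ genBand.{u} F I := by
  let _ := F.toLattice
  have hpos : ∀ {c : ℝ}, 0 < c → c • x ∈ genBand.{u} F I := fun {c} hc => by
    obtain ⟨P, hP, v, hv, hsup⟩ := (mem_genBand_iff hI).1 hx
    refine (mem_genBand_iff hI).2 ⟨P, hP, fun p => c • v p,
      fun p => ⟨hI.smul_mem c (hv p).1, show 0 ≤ c • v p from smul_nonneg hc.le (hv p).2⟩, ?_⟩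
    simpa only [abs_smul_of_pos hc] using hsup.range_smul_of_pos hc
  rcases lt_trichotomy c 0 with hc | rfl | hc
  · refine genBand_solid hI _ ((-c) • x) ?_ (hpos (neg_pos.2 hc))
    show |c • x| ≤ |(-c) • x|
    rw [neg_smul, abs_neg]
  · simpa only [zero_smul] using subset_genBand hI hI.zero_mem
  · exact hpos hc

theorem isIdeal_genBand (hI : F.IsIdeal I) : F.IsIdeal (genBand.{u} F I) :=
  ⟨subset_genBand hI hI.zero_mem, genBand_add hI, genBand_smul hI, genBand_solid hI⟩

theorem orderClosed_genBand (hI : F.IsIdeal I) :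
    FuzzyRiesz.OrderClosed.{u} F (genBand.{u} F I) := by
  let _ := F.toLattice
  rintro ι _ ⟨γ₀⟩ _ x l hx ⟨y, hxy, -, hy⟩
  have hxy : ∀ γ, |x γ - l| ≤ y γ := hxy
  have hy : IsGLB (range y) 0 := hy
  choose κ hκ a ha hsup using fun γ => (mem_genBand_iff hI).1 (hx γ)
  set d : ι → X := fun γ => (|l| - y γ) ⊔ 0
  have hd_le_l : ∀ γ, d γ ≤ |l| := fun γ =>
    sup_le (sub_le_self _ (hy.1 (mem_range_self γ))) (abs_nonneg l)
  have hd_le_x : ∀ γ, d γ ≤ |x γ| := fun γ =>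
    sup_le (sub_le_abs_of_abs_sub_le (hxy γ)) (abs_nonneg _)
  set v : (Σ γ, κ γ) → X := fun p => a p.1 p.2 ⊓ d p.1
  have hv : ∀ p, v p ∈ F.posPart I := fun p =>
    hI.mem_posPart_of_le (ha p.1 p.2) (le_inf (ha p.1 p.2).2 le_sup_right) inf_le_left
  have hsupv : IsLUB (range v) |l| := by
    refine ⟨forall_mem_range.2 fun p => inf_le_right.trans (hd_le_l p.1), fun z hz => ?_⟩
    have hdz : ∀ γ, d γ ≤ z := fun γ => by
      have h := ((hsup γ).range_inf_const (d γ)).2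
        (forall_mem_range.2 fun β => hz (mem_range_self (Sigma.mk γ β)))
      rwa [inf_eq_right.2 (hd_le_x γ)] at h
    have h : |l| - z ≤ 0 :=
      hy.2 (forall_mem_range.2 fun γ => sub_le_comm.1 (le_sup_left.trans (hdz γ)))
    exact sub_nonpos.1 h
  exact (mem_genBand_iff hI).2 ⟨Σ γ, κ γ, .intro (Sigma.mk γ₀ (hκ γ₀).some), v, hv, hsupv⟩

theorem genBand_subset {B : Set X} (hB : FuzzyRiesz.IsBand.{u} F B) (hIB : I ⊆ B) :
    genBand.{u} F I ⊆ B := by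
  let _ := F.toLattice
  rintro x ⟨κ, r, hκ, hrefl, htrans, hdir, a, ha, hmono, hsup⟩
  let _ : Preorder κ := { le := r, le_refl := hrefl, le_trans := htrans }
  have : IsDirected κ (· ≤ ·) := ⟨hdir⟩
  have hsup : IsLUB (range a) |x| := hsup
  have hconv : F.FuzzyOrderConv a |x| := by
    refine ⟨fun β => |x| - a β, fun β => ?_,
      fun β γ h => show |x| - a γ ≤ |x| - a β from sub_le_sub_left (hmono β γ h) _,
      hsup.isGLB_range_sub⟩
    show |(a β - |x|)| ≤ |x| - a β
    rw [abs_sub_comm, abs_of_nonneg (sub_nonneg.2 (hsup.1 (mem_range_self β)))]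
  have habs : |x| ∈ B := hB.2 κ a |x| (fun β => hIB (ha β).1) hconv
  exact hB.1.solid x |x| (abs_abs x).ge habs

theorem isBand_genBand (hI : F.IsIdeal I) : FuzzyRiesz.IsBand.{u} F (genBand.{u} F I) :=
  ⟨isIdeal_genBand hI, orderClosed_genBand hI⟩

end GenBand

theorem bandGenerated_spec_general {X : Type*} [AddCommGroup X] [Module ℝ X]
    (F : FuzzyRiesz X) (D : Set X) (ID : Set X)
    (hID : F.IsIdeal ID ∧ D ⊆ ID ∧ ∀ J : Set X, F.IsIdeal J → D ⊆ J → ID ⊆ J) :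
    (FuzzyRiesz.IsBand.{u} F (genBand.{u} F ID) ∧ D ⊆ genBand.{u} F ID ∧
      ∀ B : Set X, FuzzyRiesz.IsBand.{u} F B → D ⊆ B → genBand.{u} F ID ⊆ B) ∧
    (∀ C : Set X,
      (FuzzyRiesz.IsBand.{u} F C ∧ D ⊆ C ∧
        ∀ B : Set X, FuzzyRiesz.IsBand.{u} F B → D ⊆ B → C ⊆ B) ↔
      C = genBand.{u} F ID) := by
  obtain ⟨hI, hDI, hID_min⟩ := hID
  have hband : FuzzyRiesz.IsBand.{u} F (genBand.{u} F ID) := isBand_genBand hI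
  have hD : D ⊆ genBand.{u} F ID := hDI.trans (subset_genBand hI)
  have hmin : ∀ B : Set X, FuzzyRiesz.IsBand.{u} F B → D ⊆ B → genBand.{u} F ID ⊆ B :=
    fun B hB hDB => genBand_subset hB (hID_min B hB.1 hDB)
  refine ⟨⟨hband, hD, hmin⟩, fun C => ⟨?_, ?_⟩⟩
  · rintro ⟨hC, hDC, hC_min⟩
    exact (hC_min _ hband hD).antisymm (hmin C hC hDC)
  · rintro rfl
    exact ⟨hband, hD, hmin⟩

/-- the fuzzy band generated by a nonempty set `D` exists, is unique
(it is the smallest fuzzy band containing `D`), and equals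
`{x : ∃ net (x_α) in I_D⁺ with x_α ↑ |x|}`, where `I_D` is the fuzzy ideal generated by `D`. -/
theorem bandGenerated_spec {X : Type*} [AddCommGroup X] [Module ℝ X]
    (F : FuzzyRiesz X) (D : Set X) (hD : D.Nonempty) (ID : Set X)
    (hID : F.IsIdeal ID ∧ D ⊆ ID ∧ ∀ J : Set X, F.IsIdeal J → D ⊆ J → ID ⊆ J) :
    (FuzzyRiesz.IsBand.{u} F (genBand.{u} F ID) ∧ D ⊆ genBand.{u} F ID ∧
      ∀ B : Set X, FuzzyRiesz.IsBand.{u} F B → D ⊆ B → genBand.{u} F ID ⊆ B) ∧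
    (∀ C : Set X,
      (FuzzyRiesz.IsBand.{u} F C ∧ D ⊆ C ∧
        ∀ B : Set X, FuzzyRiesz.IsBand.{u} F B → D ⊆ B → C ⊆ B) ↔
      C = genBand.{u} F ID) :=
  bandGenerated_spec_general F D ID hID
end
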